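/- Let α ≥ −1 and 0 < q < r. For holomorphic g on the unit disc, (‖g‖_{α,2q}^{2q} − |g(0)|^{2q})^{1/(2q)} ≤ (‖g‖_{α,2r}^{2r} − |g(0)|^{2r})^{1/(2r)}, where ‖·‖_{α,p} is the A^p_α (weighted Bergman, or Hardy if α = −1) norm. -/

import Mathlib

/-!
For `α > -1` the measure `(α+1)(1-|z|²)^α dA` on the disc has total mass one (polar coordinates),
and for `α = -1` each circle of radius `r < 1` carries normalized arc length; in both cases the
`A^p_α` norm is an `L^p` norm for a probability measure (or a supremum of such), hence monotone
in `p`. Writing `a ≤ b` for the norms at `2q` and `2r` and `c = |g 0|`, superadditivity of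
`x ↦ x^{r/q}` on `ℝ≥0∞` gives `(a^{2q} - c^{2q})^{r/q} ≤ a^{2r} - c^{2r} ≤ b^{2r} - c^{2r}`.
-/

open MeasureTheory Metric
open scoped ENNReal

/-- The `A^p_α` (quasi-)norm, valued in `ℝ≥0∞`: for `α > −1` the weighted Bergman
norm `((α+1)∫_D |f|^p (1−|z|²)^α dA)^{1/p}` (with respect to normalized area
measure `dA = dLeb/π`), and for `α = −1` the Hardy space `H^p` norm
`sup_{0<r<1} (∫_T |f(rζ)|^p dσ(ζ))^{1/p}`. -/
noncomputable def AnormE (α p : ℝ) (f : ℂ → ℂ) : ℝ≥0∞ :=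
  if α = -1 then
    ⨆ r : {x : ℝ // 0 < x ∧ x < 1},
      ((∫⁻ θ in Set.Ioc (0:ℝ) (2 * Real.pi),
          ENNReal.ofReal (‖f (((r : ℝ) : ℂ) * Complex.exp ((θ : ℂ) * Complex.I))‖ ^ p))
        / ENNReal.ofReal (2 * Real.pi)) ^ (1 / p)
  else
    (ENNReal.ofReal (α + 1) *
      ((∫⁻ z in Metric.ball (0:ℂ) 1,
          ENNReal.ofReal (‖f z‖ ^ p * (1 - ‖z‖ ^ 2) ^ α))
        / ENNReal.ofReal Real.pi)) ^ (1 / p)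

open Set

namespace ENNReal

theorem rpow_sub_le_sub_rpow (x y : ℝ≥0∞) {s : ℝ} (hs : 1 ≤ s) :
    (x - y) ^ s ≤ x ^ s - y ^ s := by
  have hs0 : 0 < s := one_pos.trans_le hs
  rcases le_total x y with hxy | hyx
  · simp [tsub_eq_zero_of_le hxy, zero_rpow_of_pos hs0]
  rcases eq_or_ne y ⊤ with rfl | hy
  · simp [zero_rpow_of_pos hs0]
  refine le_sub_of_add_le_right (rpow_ne_top_of_nonneg hs0.le hy) ?_
  calc (x - y) ^ s + y ^ s ≤ (x - y + y) ^ s := add_rpow_le_rpow_add _ _ hs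
    _ = x ^ s := by rw [tsub_add_cancel_of_le hyx]

theorem rpow_sub_rpow_rpow_le {a b c : ℝ≥0∞} {p s : ℝ} (hp : 0 < p) (hps : p ≤ s)
    (hab : a ≤ b) : (a ^ p - c ^ p) ^ (1 / p) ≤ (b ^ s - c ^ s) ^ (1 / s) := by
  have hs : 0 < s := hp.trans_le hps
  have key : (a ^ p - c ^ p) ^ (s / p) ≤ b ^ s - c ^ s :=
    calc (a ^ p - c ^ p) ^ (s / p) ≤ (a ^ p) ^ (s / p) - (c ^ p) ^ (s / p) :=
          rpow_sub_le_sub_rpow _ _ ((one_le_div hp).2 hps)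
      _ = a ^ s - c ^ s := by rw [← rpow_mul, ← rpow_mul, mul_div_cancel₀ _ hp.ne']
      _ ≤ b ^ s - c ^ s := tsub_le_tsub_right (rpow_le_rpow hab hs.le) _
  calc (a ^ p - c ^ p) ^ (1 / p) = ((a ^ p - c ^ p) ^ (s / p)) ^ (1 / s) := by
        rw [← rpow_mul]; congr 1; field_simp
    _ ≤ (b ^ s - c ^ s) ^ (1 / s) := rpow_le_rpow key (by positivity)

end ENNReal

theorem ofReal_norm_rpow {E : Type*} [SeminormedAddCommGroup E] (x : E) {p : ℝ} (hp : 0 ≤ p) :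
    ENNReal.ofReal (‖x‖ ^ p) = ‖x‖ₑ ^ p := by
  rw [← ENNReal.ofReal_rpow_of_nonneg (norm_nonneg x) hp, ofReal_norm]

theorem Complex.setIntegral_ball_fun_norm {F : Type*} [NormedAddCommGroup F] [NormedSpace ℝ F]
    (f : ℝ → F) (r : ℝ) :
    ∫ z in ball (0 : ℂ) r, f ‖z‖ = (2 * Real.pi) • ∫ y in Ioo 0 r, y • f y := by
  have hball : (ball (0 : ℂ) r).indicator (fun z => f ‖z‖) = fun z => (Iio r).indicator f ‖z‖ := by
    ext z; simp [indicator]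
  have hrad : (fun y : ℝ => y ^ (Module.finrank ℝ ℂ - 1) • (Iio r).indicator f y)
      = (Iio r).indicator fun y => y • f y := by
    ext y; simp [indicator]
  rw [← integral_indicator measurableSet_ball, hball, integral_fun_norm_addHaar, hrad,
    setIntegral_indicator measurableSet_Iio, Ioi_inter_Iio, Complex.finrank_real_complex]
  simp only [Measure.real, Complex.volume_ball]
  rw [mul_smul, ← Nat.cast_smul_eq_nsmul ℝ]
  simp

section RadialWeight

variable {α : ℝ}

theorem continuousOn_one_sub_sq_rpow (hα : 0 ≤ α) :
    ContinuousOn (fun y : ℝ => (1 - y ^ 2) ^ α) (Icc 0 1) :=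
  (continuous_const.sub (continuous_pow 2)).continuousOn.rpow_const fun _ _ => Or.inr hα

theorem hasDerivAt_neg_one_sub_sq_rpow_div (hα : α ≠ -1) {y : ℝ} (hy : y ∈ Ioo (0 : ℝ) 1) :
    HasDerivAt (fun y : ℝ => -(1 - y ^ 2) ^ (α + 1) / (2 * (α + 1)))
      (y * (1 - y ^ 2) ^ α) y := by
  have hpos : 0 < 1 - y ^ 2 := by nlinarith [hy.1, hy.2]
  have hα1 : α + 1 ≠ 0 := by rwa [Ne, add_eq_zero_iff_eq_neg]
  have hderiv := ((((hasDerivAt_pow 2 y).const_sub 1).rpow_const (p := α + 1)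
    (Or.inl hpos.ne')).neg).div_const (2 * (α + 1))
  refine hderiv.congr_deriv ?_
  rw [add_sub_cancel_right]
  field_simp
  ring

theorem integrableOn_mul_one_sub_sq_rpow (hα : -1 < α) :
    IntegrableOn (fun y : ℝ => y * (1 - y ^ 2) ^ α) (Ioc 0 1) :=
  intervalIntegral.integrableOn_deriv_of_nonneg
    ((continuousOn_one_sub_sq_rpow (by linarith)).neg.div_const _)
    (fun _ hy => hasDerivAt_neg_one_sub_sq_rpow_div hα.ne' hy)
    fun _ hy => mul_nonneg hy.1.le (Real.rpow_nonneg (by nlinarith [hy.1, hy.2]) _)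

theorem integral_mul_one_sub_sq_rpow (hα : -1 < α) :
    ∫ y in (0 : ℝ)..1, y * (1 - y ^ 2) ^ α = 1 / (2 * (α + 1)) := by
  have hα1 : 0 < α + 1 := by linarith
  rw [intervalIntegral.integral_eq_sub_of_hasDerivAt_of_le zero_le_one
    ((continuousOn_one_sub_sq_rpow hα1.le).neg.div_const _)
    (fun _ hy => hasDerivAt_neg_one_sub_sq_rpow_div hα.ne' hy)
    ((intervalIntegrable_iff_integrableOn_Ioc_of_le zero_le_one).2
      (integrableOn_mul_one_sub_sq_rpow hα))]
  norm_num [Real.zero_rpow hα1.ne', neg_div, mul_comm]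

theorem lintegral_ball_one_sub_norm_sq_rpow (hα : -1 < α) :
    ∫⁻ z in ball (0 : ℂ) 1, ENNReal.ofReal ((1 - ‖z‖ ^ 2) ^ α)
      = ENNReal.ofReal (Real.pi / (α + 1)) := by
  have hint : IntegrableOn (fun z : ℂ => (1 - ‖z‖ ^ 2) ^ α) (ball 0 1) :=
    (integrableOn_fun_norm_addHaar volume (f := fun y => (1 - y ^ 2) ^ α)).2 <| by
      simpa [Complex.finrank_real_complex] using
        (integrableOn_mul_one_sub_sq_rpow hα).mono_set Ioo_subset_Ioc_self
  have hnonneg : 0 ≤ᵐ[volume.restrict (ball (0 : ℂ) 1)] fun z => (1 - ‖z‖ ^ 2) ^ α := by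
    filter_upwards [ae_restrict_mem measurableSet_ball] with z hz
    exact Real.rpow_nonneg (by nlinarith [mem_ball_zero_iff.1 hz, norm_nonneg z]) _
  rw [← ofReal_integral_eq_lintegral_ofReal hint hnonneg,
    Complex.setIntegral_ball_fun_norm (fun y => (1 - y ^ 2) ^ α), ← integral_Ioc_eq_integral_Ioo,
    ← intervalIntegral.integral_of_le zero_le_one]
  simp only [smul_eq_mul, integral_mul_one_sub_sq_rpow hα]
  congr 1
  field_simp

end RadialWeight

noncomputable def bergmanMeasure (α : ℝ) : Measure ℂ :=
  (ENNReal.ofReal (α + 1) / ENNReal.ofReal Real.pi) •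
    (volume.restrict (ball 0 1)).withDensity fun z => ENNReal.ofReal ((1 - ‖z‖ ^ 2) ^ α)

theorem isProbabilityMeasure_bergmanMeasure {α : ℝ} (hα : -1 < α) :
    IsProbabilityMeasure (bergmanMeasure α) := by
  have hα1 : 0 < α + 1 := by linarith
  constructor
  rw [bergmanMeasure, Measure.smul_apply, withDensity_apply _ MeasurableSet.univ,
    Measure.restrict_univ, lintegral_ball_one_sub_norm_sq_rpow hα, smul_eq_mul,
    ← ENNReal.ofReal_div_of_pos Real.pi_pos, ← ENNReal.ofReal_mul (by positivity),
    ← ENNReal.ofReal_one]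
  congr 1
  field_simp

noncomputable def normalizedArcMeasure : Measure ℝ :=
  (ENNReal.ofReal (2 * Real.pi))⁻¹ • volume.restrict (Ioc 0 (2 * Real.pi))

instance : IsProbabilityMeasure normalizedArcMeasure := by
  constructor
  rw [normalizedArcMeasure, Measure.smul_apply, Measure.restrict_apply_univ, Real.volume_Ioc,
    sub_zero, smul_eq_mul, ENNReal.inv_mul_cancel (by simp [Real.pi_pos]) ENNReal.ofReal_ne_top]

section AnormE

variable {α p : ℝ} (f : ℂ → ℂ)

theorem AnormE_eq_eLpNorm'_bergmanMeasure (hα : α ≠ -1) (hp : 0 ≤ p) :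
    AnormE α p f = eLpNorm' f p (bergmanMeasure α) := by
  have hw : Measurable fun z : ℂ => ENNReal.ofReal ((1 - ‖z‖ ^ 2) ^ α) := by fun_prop
  rw [AnormE, if_neg hα, eLpNorm', bergmanMeasure, lintegral_smul_measure,
    lintegral_withDensity_eq_lintegral_mul_non_measurable _ hw
      (.of_forall fun _ => ENNReal.ofReal_lt_top)]
  congr 1
  simp only [ENNReal.div_eq_inv_mul, smul_eq_mul, Pi.mul_apply]
  rw [← mul_assoc, mul_comm (ENNReal.ofReal (α + 1))]
  refine congrArg _ (lintegral_congr fun z => ?_)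
  rw [ENNReal.ofReal_mul (by positivity), ofReal_norm_rpow _ hp, mul_comm]

theorem AnormE_neg_one_eq_iSup_eLpNorm' (hp : 0 ≤ p) :
    AnormE (-1) p f = ⨆ r : {x : ℝ // 0 < x ∧ x < 1},
      eLpNorm' (fun θ => f (circleMap 0 r θ)) p normalizedArcMeasure := by
  simp only [AnormE, if_pos, eLpNorm', normalizedArcMeasure, lintegral_smul_measure, circleMap,
    zero_add, ofReal_norm_rpow _ hp, smul_eq_mul, ENNReal.div_eq_inv_mul]

end AnormE

theorem AnormE_le_AnormE_of_exponent_le {α p s : ℝ} (hα : -1 ≤ α) (hp : 0 < p) (hps : p ≤ s)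
    {f : ℂ → ℂ} (hf : ContinuousOn f (ball 0 1)) : AnormE α p f ≤ AnormE α s f := by
  rcases hα.eq_or_lt with rfl | hα
  · rw [AnormE_neg_one_eq_iSup_eLpNorm' f hp.le,
      AnormE_neg_one_eq_iSup_eLpNorm' f (hp.le.trans hps)]
    refine iSup_mono fun r => eLpNorm'_le_eLpNorm'_of_exponent_le hp hps _ ?_
    refine (hf.comp_continuous (continuous_circleMap 0 r) fun θ => ?_).aestronglyMeasurable
    simp [abs_of_pos r.2.1, r.2.2]
  · have := isProbabilityMeasure_bergmanMeasure hα
    rw [AnormE_eq_eLpNorm'_bergmanMeasure f hα.ne' hp.le,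
      AnormE_eq_eLpNorm'_bergmanMeasure f hα.ne' (hp.le.trans hps)]
    refine eLpNorm'_le_eLpNorm'_of_exponent_le hp hps _ ?_
    exact (hf.aestronglyMeasurable measurableSet_ball).mono_ac
      (Measure.smul_absolutelyContinuous.trans (withDensity_absolutelyContinuous _ _))

/-- For `α ≥ −1` and `0 < q < r`,
`(‖g‖_{α,2q}^{2q} − |g 0|^{2q})^{1/(2q)} ≤ (‖g‖_{α,2r}^{2r} − |g 0|^{2r})^{1/(2r)}`. -/
theorem stmt_9 (α q r : ℝ) (hα : -1 ≤ α) (hq : 0 < q) (hqr : q < r)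
    (g : ℂ → ℂ) (hg : DifferentiableOn ℂ g (Metric.ball 0 1)) :
    (AnormE α (2 * q) g ^ (2 * q) - ENNReal.ofReal (‖g 0‖ ^ (2 * q))) ^ (1 / (2 * q))
      ≤ (AnormE α (2 * r) g ^ (2 * r)
          - ENNReal.ofReal (‖g 0‖ ^ (2 * r))) ^ (1 / (2 * r)) := by
  have h2q : 0 < 2 * q := by positivity
  have h2r : 0 < 2 * r := by linarith
  rw [ofReal_norm_rpow _ h2q.le, ofReal_norm_rpow _ h2r.le]
  exact ENNReal.rpow_sub_rpow_rpow_le h2q (by linarith)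
    (AnormE_le_AnormE_of_exponent_le hα h2q (by linarith) hg.continuousOn)
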